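/- Let (T_n(t))_{t>0}, n ∈ ℕ, be a sequence of sub-Markovian semigroups of kernel operators on a Polish space E which is monotone in n, i.e. either T_n(t) ≤ T_{n+1}(t) for all n and t > 0, or T_n(t) ≥ T_{n+1}(t) for all n and t > 0. Assume that (A) every semigroup T_n enjoys the strong Feller property, and (B) for some λ > 0 the function R(λ)𝟙 is continuous on E, where (T(t))_{t>0} is the limit semigroup given by (T(t)f)(x) = lim_{n→∞}(T_n(t)f)(x) and (R(λ))_{λ>0} is its Laplace transform, (R(λ)f)(x) = ∫_0^∞ e^{−λt}(T(t)f)(x) dt. Then the limit semigroup (T(t))_{t>0} enjoys the strong Feller property, i.e. T(t)f ∈ C_b(E) for every t > 0 and every f ∈ B_b(E). -/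

import Mathlib

open MeasureTheory Filter Topology

/-- `f` is a bounded Borel measurable real-valued function. -/
def IsBb {E : Type*} [MeasurableSpace E] (f : E → ℝ) : Prop :=
  Measurable f ∧ ∃ C : ℝ, ∀ x, |f x| ≤ C

/-- `f` is a bounded continuous real-valued function. -/
def IsCb {E : Type*} [TopologicalSpace E] (f : E → ℝ) : Prop :=
  Continuous f ∧ ∃ C : ℝ, ∀ x, |f x| ≤ C

/-- The kernel operator associated with a kernel `k : E → Measure E`. -/
noncomputable def kOp {E : Type*} [MeasurableSpace E] (k : E → Measure E) (f : E → ℝ) (x : E) : ℝ :=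
  ∫ y, f y ∂(k x)

/-- `(k t)_{t>0}` is a positive semigroup of kernels on `E`, bounded by `M`:
measurability in `x`, total mass bounded by `M`, Chapman–Kolmogorov, and joint
measurability of `(t,x) ↦ (T(t)f)(x)` on `(0,∞) × E` for bounded measurable `f`. -/
def IsKernelSemigroup {E : Type*} [MeasurableSpace E] (k : ℝ → E → Measure E) (M : NNReal) : Prop :=
  (∀ t, 0 < t → ∀ A : Set E, MeasurableSet A → Measurable fun x => k t x A) ∧
  (∀ t, 0 < t → ∀ x, k t x Set.univ ≤ (M : ENNReal)) ∧
  (∀ t, 0 < t → ∀ s, 0 < s → ∀ x, ∀ A : Set E, MeasurableSet A →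
    k (t + s) x A = ∫⁻ y, k s y A ∂(k t x)) ∧
  (∀ f : E → ℝ, IsBb f → Measurable fun p : Set.Ioi (0:ℝ) × E => kOp (k p.1.1) f p.2)

/-- The Laplace transform (pseudo-resolvent) of the semigroup of kernel operators. -/
noncomputable def laplaceOp {E : Type*} [MeasurableSpace E]
    (k : ℝ → E → Measure E) (l : ℝ) (f : E → ℝ) (x : E) : ℝ :=
  ∫ t in Set.Ioi (0:ℝ), Real.exp (-l * t) * kOp (k t) f x

/-!
Fix `x` and pick `s ∈ (0, t)` at which the antitone map `τ ↦ (T(τ)𝟙)(x)` is continuous. Since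
`T(t)f = T(s)(T(t-s)f)`, and the kernels of `T(s)` and `T_n(s)` are comparable, so that
`|T(s)g - T_n(s)g| ≤ ‖g‖∞ |T(s)𝟙 - T_n(s)𝟙|`, the function `T(t)f` is continuous at `x` as soon
as `T(s)𝟙` is.

For every measurable `S ⊆ (0, ∞)` the truncated Laplace transform `∫_S e^{-λτ} T(τ)𝟙 dτ` is a
monotone limit of the continuous functions `∫_S e^{-λτ} T_n(τ)𝟙 dτ`, hence lower (for increasing
sequences) or upper (for decreasing ones) semicontinuous. The transforms over `S` and over its complement add up to the continuous
`R(λ)𝟙`, so each of them is continuous. Finally, `T(τ)𝟙` is antitone in `τ`, so its weighted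
averages over the windows `(a, s]` and `(s, b]` bound `T(s)𝟙` from above and below, and at `x`
they converge to `T(s)𝟙(x)` as `a ↑ s`, `b ↓ s`; this gives continuity of `T(s)𝟙` at `x`.
-/

open ProbabilityTheory

section Semicontinuity

variable {X : Type*} [TopologicalSpace X]

theorem lowerSemicontinuous_of_tendsto_of_le {F : ℕ → X → ℝ} {f : X → ℝ}
    (hF : ∀ n, Continuous (F n)) (hle : ∀ n y, F n y ≤ f y)
    (hlim : ∀ y, Tendsto (fun n => F n y) atTop (𝓝 (f y))) :
    LowerSemicontinuous f := by
  intro x a ha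
  obtain ⟨n, hn⟩ := ((hlim x).eventually_const_lt ha).exists
  exact ((hF n).continuousAt.eventually_const_lt hn).mono fun y hy => hy.trans_le (hle n y)

theorem continuous_of_lowerSemicontinuous_of_continuous_add {f g : X → ℝ}
    (hf : LowerSemicontinuous f) (hg : LowerSemicontinuous g)
    (hfg : Continuous fun y => f y + g y) : Continuous f := by
  refine continuous_iff_lower_upperSemicontinuous.2 ⟨hf, fun x a ha => ?_⟩
  have hg_near : ∀ᶠ y in 𝓝 x, g x - (a - f x) / 2 < g y := hg x _ (by linarith)
  have hfg_near : ∀ᶠ y in 𝓝 x, f y + g y < f x + g x + (a - f x) / 2 :=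
    hfg.continuousAt.eventually_lt_const (by linarith)
  filter_upwards [hg_near, hfg_near] with y hy₁ hy₂
  linarith

theorem continuousAt_of_abs_sub_le_mul_abs_sub
    {G U : X → ℝ} {Gn Un : ℕ → X → ℝ} {C : ℝ} {x : X}
    (hbound : ∀ n y, |G y - Gn n y| ≤ C * |U y - Un n y|)
    (hGn : ∀ n, ContinuousAt (Gn n) x) (hUn : ∀ n, ContinuousAt (Un n) x)
    (hU : ContinuousAt U x) (hlim : Tendsto (fun n => Un n x) atTop (𝓝 (U x))) :
    ContinuousAt G x := by
  rw [ContinuousAt, tendsto_iff_dist_tendsto_zero]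
  refine tendsto_order.2 ⟨fun a ha => .of_forall fun y => ha.trans_le dist_nonneg,
    fun ε hε => ?_⟩
  have herr : Tendsto (fun n => 2 * C * |U x - Un n x|) atTop (𝓝 0) := by
    simpa using ((tendsto_const_nhds (x := U x)).sub hlim).abs.const_mul (2 * C)
  obtain ⟨n, hn⟩ := (herr.eventually_lt_const hε).exists
  have hB : ContinuousAt
      (fun y => C * |U y - Un n y| + |Gn n y - Gn n x| + C * |U x - Un n x|) x := by
    fun_prop
  have hBx : C * |U x - Un n x| + |Gn n x - Gn n x| + C * |U x - Un n x|
      = 2 * C * |U x - Un n x| := by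
    rw [sub_self, abs_zero]; ring
  filter_upwards [hB.eventually_lt_const (hBx ▸ hn)] with y hy
  have h₁ := hbound n y
  have h₂ := hbound n x
  rw [Real.dist_eq]
  calc |G y - G x| ≤ |G y - Gn n y| + |Gn n y - Gn n x| + |G x - Gn n x| := by
        have := abs_sub_le (G y) (Gn n y) (G x)
        have := abs_sub_le (Gn n y) (Gn n x) (G x)
        rw [abs_sub_comm (Gn n x)] at this
        linarith
    _ < ε := by linarith

end Semicontinuity

section Measures

variable {α : Type*} [MeasurableSpace α]

theorem abs_integral_sub_integral_le_of_le {μ ν : Measure α} [IsFiniteMeasure ν] (hle : μ ≤ ν)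
    {g : α → ℝ} {C : ℝ} (hg : Measurable g) (hgC : ∀ y, |g y| ≤ C) :
    |∫ y, g y ∂ν - ∫ y, g y ∂μ| ≤ C * (ν.real Set.univ - μ.real Set.univ) := by
  have : IsFiniteMeasure μ := isFiniteMeasure_of_le ν hle
  have hbound : ∀ m : Measure α, ∀ᵐ y ∂m, ‖g y‖ ≤ C := fun m => ae_of_all _ hgC
  rw [← Measure.sub_add_cancel_of_le hle, integral_add_measure
    (.of_bound hg.aestronglyMeasurable C (hbound _))
    (.of_bound hg.aestronglyMeasurable C (hbound _)), measureReal_add_apply,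
    add_sub_cancel_right, add_sub_cancel_right]
  exact norm_integral_le_of_norm_le_const (hbound _)

theorem abs_integral_sub_integral_le {μ ν : Measure α} [IsFiniteMeasure μ] [IsFiniteMeasure ν]
    (hcmp : μ ≤ ν ∨ ν ≤ μ) {g : α → ℝ} {C : ℝ} (hg : Measurable g) (hgC : ∀ y, |g y| ≤ C) :
    |∫ y, g y ∂μ - ∫ y, g y ∂ν| ≤ C * |μ.real Set.univ - ν.real Set.univ| := by
  have hreal : ∀ {μ ν : Measure α} [IsFiniteMeasure ν], μ ≤ ν →
      μ.real Set.univ ≤ ν.real Set.univ := fun hle =>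
    ENNReal.toReal_mono (measure_ne_top _ _) (hle Set.univ)
  rcases hcmp with hle | hle
  · rw [abs_sub_comm, abs_sub_comm (μ.real _), abs_of_nonneg (sub_nonneg.2 (hreal hle))]
    exact abs_integral_sub_integral_le_of_le hle hg hgC
  · rw [abs_of_nonneg (sub_nonneg.2 (hreal hle))]
    exact abs_integral_sub_integral_le_of_le hle hg hgC

theorem le_of_tendsto_measureReal_of_monotone {μ : ℕ → Measure α} {ν : Measure α}
    [∀ n, IsFiniteMeasure (μ n)] [IsFiniteMeasure ν]
    (hmono : ∀ n A, MeasurableSet A → μ n A ≤ μ (n + 1) A)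
    (hlim : ∀ A, MeasurableSet A → Tendsto (fun n => (μ n).real A) atTop (𝓝 (ν.real A)))
    (n : ℕ) : μ n ≤ ν := by
  refine Measure.le_iff.2 fun A hA => (ENNReal.toReal_le_toReal (measure_ne_top _ _)
    (measure_ne_top _ _)).1 ?_
  have h : Monotone fun m => (μ m).real A := monotone_nat_of_le_succ fun m =>
    ENNReal.toReal_mono (measure_ne_top _ _) (hmono m A hA)
  exact h.ge_of_tendsto (hlim A hA) n

theorem ge_of_tendsto_measureReal_of_antitone {μ : ℕ → Measure α} {ν : Measure α}
    [∀ n, IsFiniteMeasure (μ n)] [IsFiniteMeasure ν]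
    (hanti : ∀ n A, MeasurableSet A → μ (n + 1) A ≤ μ n A)
    (hlim : ∀ A, MeasurableSet A → Tendsto (fun n => (μ n).real A) atTop (𝓝 (ν.real A)))
    (n : ℕ) : ν ≤ μ n := by
  refine Measure.le_iff.2 fun A hA => (ENNReal.toReal_le_toReal (measure_ne_top _ _)
    (measure_ne_top _ _)).1 ?_
  have h : Antitone fun m => (μ m).real A := antitone_nat_of_succ_le fun m =>
    ENNReal.toReal_mono (measure_ne_top _ _) (hanti m A hA)
  exact h.le_of_tendsto (hlim A hA) n

end Measures

structure IsUnitBoundedFamily {X : Type*} (u : ℝ → X → ℝ) : Prop where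
  aestronglyMeasurable : ∀ y, AEStronglyMeasurable (fun τ => u τ y) (volume.restrict (Set.Ioi 0))
  abs_le_one : ∀ τ, 0 < τ → ∀ y, |u τ y| ≤ 1

/-- `laplaceOp k l f` is `laplaceOn (fun τ => kOp (k τ) f) l (Set.Ioi 0)` by definition. -/
noncomputable def laplaceOn {X : Type*} (u : ℝ → X → ℝ) (l : ℝ) (S : Set ℝ) (y : X) : ℝ :=
  ∫ τ in S, Real.exp (-l * τ) * u τ y

section Laplace

variable {X : Type*} {u v : ℝ → X → ℝ} {un : ℕ → ℝ → X → ℝ} {l : ℝ} {S : Set ℝ}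

theorem IsUnitBoundedFamily.neg (hu : IsUnitBoundedFamily u) :
    IsUnitBoundedFamily fun τ y => -u τ y :=
  ⟨fun y => (hu.aestronglyMeasurable y).neg,
    fun τ hτ y => (abs_neg _).trans_le (hu.abs_le_one τ hτ y)⟩

theorem IsUnitBoundedFamily.norm_exp_mul_le (hu : IsUnitBoundedFamily u) {τ : ℝ} (hτ : 0 < τ)
    (y : X) : ‖Real.exp (-l * τ) * u τ y‖ ≤ Real.exp (-l * τ) := by
  rw [norm_mul, Real.norm_of_nonneg (Real.exp_pos _).le]
  exact mul_le_of_le_one_right (Real.exp_pos _).le (hu.abs_le_one τ hτ y)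

theorem IsUnitBoundedFamily.integrableOn_exp_mul (hu : IsUnitBoundedFamily u) (hl : 0 < l)
    (hS : S ⊆ Set.Ioi 0) (y : X) : IntegrableOn (fun τ => Real.exp (-l * τ) * u τ y) S := by
  refine IntegrableOn.mono_set ?_ hS
  refine Integrable.mono' (exp_neg_integrableOn_Ioi 0 hl)
    ((by fun_prop : Continuous fun τ : ℝ => Real.exp (-l * τ)).aestronglyMeasurable.mul
      (hu.aestronglyMeasurable y)) ?_
  refine (ae_restrict_iff' measurableSet_Ioi).2 (ae_of_all _ fun τ hτ => ?_)
  simpa only [neg_mul] using hu.norm_exp_mul_le hτ y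

theorem continuous_laplaceOn [TopologicalSpace X] [FirstCountableTopology X] (hl : 0 < l)
    (hu : IsUnitBoundedFamily u) (hcont : ∀ τ, 0 < τ → Continuous (u τ))
    (hSm : MeasurableSet S) (hS : S ⊆ Set.Ioi 0) :
    Continuous (laplaceOn u l S) :=
  continuous_of_dominated (fun y => (hu.integrableOn_exp_mul hl hS y).aestronglyMeasurable)
    (fun y => (ae_restrict_iff' hSm).2 (ae_of_all _ fun _ hτ => hu.norm_exp_mul_le (hS hτ) y))
    ((exp_neg_integrableOn_Ioi 0 hl).mono_set hS)
    ((ae_restrict_iff' hSm).2 (ae_of_all _ fun τ hτ => continuous_const.mul (hcont τ (hS hτ))))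

theorem tendsto_laplaceOn {y : X} (hl : 0 < l) (hun : ∀ n, IsUnitBoundedFamily (un n))
    (hlim : ∀ τ, 0 < τ → Tendsto (fun n => un n τ y) atTop (𝓝 (u τ y)))
    (hSm : MeasurableSet S) (hS : S ⊆ Set.Ioi 0) :
    Tendsto (fun n => laplaceOn (un n) l S y) atTop (𝓝 (laplaceOn u l S y)) :=
  tendsto_integral_of_dominated_convergence (fun τ => Real.exp (-l * τ))
    (fun n => ((hun n).integrableOn_exp_mul hl hS y).aestronglyMeasurable)
    ((exp_neg_integrableOn_Ioi 0 hl).mono_set hS)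
    (fun n => (ae_restrict_iff' hSm).2 (ae_of_all _ fun _ hτ => (hun n).norm_exp_mul_le (hS hτ) y))
    ((ae_restrict_iff' hSm).2 (ae_of_all _ fun τ hτ => (hlim τ (hS hτ)).const_mul _))

theorem laplaceOn_mono {y : X} (hl : 0 < l) (hv : IsUnitBoundedFamily v)
    (hu : IsUnitBoundedFamily u) (hle : ∀ τ, 0 < τ → v τ y ≤ u τ y)
    (hSm : MeasurableSet S) (hS : S ⊆ Set.Ioi 0) :
    laplaceOn v l S y ≤ laplaceOn u l S y :=
  setIntegral_mono_on (hv.integrableOn_exp_mul hl hS y) (hu.integrableOn_exp_mul hl hS y) hSm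
    fun τ hτ => mul_le_mul_of_nonneg_left (hle τ (hS hτ)) (Real.exp_pos _).le

theorem laplaceOn_add_laplaceOn_sdiff (hl : 0 < l) (hu : IsUnitBoundedFamily u)
    (hSm : MeasurableSet S) (hS : S ⊆ Set.Ioi 0) (y : X) :
    laplaceOn u l S y + laplaceOn u l (Set.Ioi 0 \ S) y = laplaceOn u l (Set.Ioi 0) y := by
  have h := integral_inter_add_sdiff hSm (hu.integrableOn_exp_mul hl subset_rfl y)
  rwa [Set.inter_eq_right.2 hS] at h

theorem laplaceOn_neg : laplaceOn (fun τ y => -u τ y) l S = fun y => -laplaceOn u l S y := by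
  funext y
  simp only [laplaceOn, mul_neg, integral_neg]

variable [TopologicalSpace X] [FirstCountableTopology X]

theorem continuous_laplaceOn_of_le_of_tendsto (hl : 0 < l) (hun : ∀ n, IsUnitBoundedFamily (un n))
    (hcont : ∀ n τ, 0 < τ → Continuous (un n τ)) (hu : IsUnitBoundedFamily u)
    (hle : ∀ n τ, 0 < τ → ∀ y, un n τ y ≤ u τ y)
    (hlim : ∀ τ, 0 < τ → ∀ y, Tendsto (fun n => un n τ y) atTop (𝓝 (u τ y)))
    (hR : Continuous (laplaceOn u l (Set.Ioi 0))) (hSm : MeasurableSet S)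
    (hS : S ⊆ Set.Ioi 0) :
    Continuous (laplaceOn u l S) := by
  have hlsc : ∀ T : Set ℝ, MeasurableSet T → T ⊆ Set.Ioi 0 →
      LowerSemicontinuous (laplaceOn u l T) := fun T hTm hT =>
    lowerSemicontinuous_of_tendsto_of_le
      (fun n => continuous_laplaceOn hl (hun n) (hcont n) hTm hT)
      (fun n y => laplaceOn_mono hl (hun n) hu (fun τ hτ => hle n τ hτ y) hTm hT)
      (fun y => tendsto_laplaceOn hl hun (fun τ hτ => hlim τ hτ y) hTm hT)
  refine continuous_of_lowerSemicontinuous_of_continuous_add (hlsc S hSm hS)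
    (hlsc _ (measurableSet_Ioi.diff hSm) Set.sdiff_subset) ?_
  simpa only [laplaceOn_add_laplaceOn_sdiff hl hu hSm hS] using hR

theorem continuous_laplaceOn_of_monotone_approx (hl : 0 < l)
    (hun : ∀ n, IsUnitBoundedFamily (un n)) (hcont : ∀ n τ, 0 < τ → Continuous (un n τ))
    (hu : IsUnitBoundedFamily u)
    (hcmp : (∀ n τ, 0 < τ → ∀ y, un n τ y ≤ u τ y) ∨ ∀ n τ, 0 < τ → ∀ y, u τ y ≤ un n τ y)
    (hlim : ∀ τ, 0 < τ → ∀ y, Tendsto (fun n => un n τ y) atTop (𝓝 (u τ y)))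
    (hR : Continuous (laplaceOn u l (Set.Ioi 0))) (hSm : MeasurableSet S)
    (hS : S ⊆ Set.Ioi 0) :
    Continuous (laplaceOn u l S) := by
  rcases hcmp with hle | hge
  · exact continuous_laplaceOn_of_le_of_tendsto hl hun hcont hu hle hlim hR hSm hS
  · have h := continuous_laplaceOn_of_le_of_tendsto hl (fun n => (hun n).neg)
      (fun n τ hτ => (hcont n τ hτ).neg) hu.neg (fun n τ hτ y => neg_le_neg (hge n τ hτ y))
      (fun τ hτ y => (hlim τ hτ y).neg) (by rw [laplaceOn_neg]; exact hR.neg) hSm hS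
    rw [laplaceOn_neg] at h
    exact continuous_neg_iff.1 h

end Laplace

section Window

variable {X : Type*} {u : ℝ → X → ℝ} {l a b s : ℝ}

theorem integral_exp_neg_mul_Ioc_pos (hab : a < b) :
    0 < ∫ τ in Set.Ioc a b, Real.exp (-l * τ) := by
  rw [← intervalIntegral.integral_of_le hab.le]
  exact intervalIntegral.intervalIntegral_pos_of_pos_on
    ((by fun_prop : Continuous fun τ : ℝ => Real.exp (-l * τ)).intervalIntegrable a b)
    (fun τ _ => Real.exp_pos _) hab

theorem laplaceOn_Ioc_mem_Icc (hl : 0 < l) (hu : IsUnitBoundedFamily u) {y : X}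
    (hanti : AntitoneOn (fun τ => u τ y) (Set.Ioi 0)) (ha : 0 < a) :
    laplaceOn u l (Set.Ioc a b) y ∈ Set.Icc ((∫ τ in Set.Ioc a b, Real.exp (-l * τ)) * u b y)
      ((∫ τ in Set.Ioc a b, Real.exp (-l * τ)) * u a y) := by
  have hIoc : Set.Ioc a b ⊆ Set.Ioi 0 := fun τ hτ => ha.trans hτ.1
  have hexp : IntegrableOn (fun τ => Real.exp (-l * τ)) (Set.Ioc a b) :=
    (exp_neg_integrableOn_Ioi 0 hl).mono_set hIoc
  have hint := hu.integrableOn_exp_mul hl hIoc y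
  rw [← integral_mul_const, ← integral_mul_const]
  refine ⟨setIntegral_mono_on (hexp.mul_const _) hint measurableSet_Ioc fun τ hτ => ?_,
    setIntegral_mono_on hint (hexp.mul_const _) measurableSet_Ioc fun τ hτ => ?_⟩
  · exact mul_le_mul_of_nonneg_left (hanti (hIoc hτ) (ha.trans_le (hτ.1.le.trans hτ.2)) hτ.2)
      (Real.exp_pos _).le
  · exact mul_le_mul_of_nonneg_left (hanti (Set.mem_Ioi.2 ha) (hIoc hτ) hτ.1.le)
      (Real.exp_pos _).le

theorem continuousAt_of_continuous_laplaceOn_Ioc [TopologicalSpace X] {x : X} (hl : 0 < l)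
    (hu : IsUnitBoundedFamily u) (hanti : ∀ y, AntitoneOn (fun τ => u τ y) (Set.Ioi 0))
    (hwin : ∀ a b, 0 < a → a < b → Continuous (laplaceOn u l (Set.Ioc a b)))
    (hs : 0 < s) (hcs : ContinuousAt (fun τ => u τ x) s) :
    ContinuousAt (u s) x := by
  have hIcc : ∀ a b, 0 < a → ∀ y, laplaceOn u l (Set.Ioc a b) y ∈
      Set.Icc ((∫ τ in Set.Ioc a b, Real.exp (-l * τ)) * u b y)
        ((∫ τ in Set.Ioc a b, Real.exp (-l * τ)) * u a y) := fun a b ha y =>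
    laplaceOn_Ioc_mem_Icc hl hu (hanti y) ha
  refine continuousAt_iff_lower_upperSemicontinuousAt.2 ⟨fun c hc => ?_, fun c hc => ?_⟩
  · obtain ⟨b, hcb, hsb, -⟩ := (((hcs.eventually (lt_mem_nhds hc)).filter_mono
      nhdsWithin_le_nhds).and (Ioo_mem_nhdsGT (lt_add_one s))).exists
    have hW := integral_exp_neg_mul_Ioc_pos (l := l) hsb
    have hx : _ * c < laplaceOn u l (Set.Ioc s b) x :=
      ((mul_lt_mul_iff_right₀ hW).2 hcb).trans_le (hIcc s b hs x).1
    filter_upwards [(hwin s b hs hsb).continuousAt.eventually_const_lt hx] with y hy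
    exact (mul_lt_mul_iff_right₀ hW).1 (hy.trans_le (hIcc s b hs y).2)
  · obtain ⟨a, hac, ha, has⟩ := (((hcs.eventually (gt_mem_nhds hc)).filter_mono
      nhdsWithin_le_nhds).and (Ioo_mem_nhdsLT hs)).exists
    have hW := integral_exp_neg_mul_Ioc_pos (l := l) has
    have hx : laplaceOn u l (Set.Ioc a s) x < _ * c :=
      (hIcc a s ha x).2.trans_lt ((mul_lt_mul_iff_right₀ hW).2 hac)
    filter_upwards [(hwin a s ha has).continuousAt.eventually_lt_const hx] with y hy
    exact (mul_lt_mul_iff_right₀ hW).1 ((hIcc a s ha y).1.trans_lt hy)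

end Window

theorem exists_mem_Ioo_continuousAt_of_antitoneOn {f : ℝ → ℝ} (hf : AntitoneOn f (Set.Ioi 0))
    {t : ℝ} (ht : 0 < t) : ∃ s ∈ Set.Ioo 0 t, ContinuousAt f s := by
  obtain ⟨s, hs, hsc⟩ := (hf.countable_not_continuousWithinAt.dense_compl ℝ).inter_open_nonempty
    _ isOpen_Ioo (Set.nonempty_Ioo.2 ht)
  refine ⟨s, hs, ContinuousWithinAt.continuousAt ?_ (Ioi_mem_nhds hs.1)⟩
  by_contra h
  exact hsc ⟨hs.1, h⟩

section KernelOperators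

variable {E : Type*} [MeasurableSpace E]

theorem isBb_one : IsBb (fun _ : E => (1 : ℝ)) := ⟨measurable_const, 1, fun _ => by simp⟩

theorem isBb_indicator_one {A : Set E} (hA : MeasurableSet A) :
    IsBb (A.indicator fun _ => (1 : ℝ)) :=
  ⟨measurable_const.indicator hA, 1, fun x => by by_cases h : x ∈ A <;> simp [h]⟩

theorem kOp_indicator_one (k : E → Measure E) {A : Set E} (hA : MeasurableSet A) (x : E) :
    kOp k (A.indicator fun _ => (1 : ℝ)) x = (k x).real A := by
  simp [kOp, integral_indicator_const _ hA]

theorem kOp_one (k : E → Measure E) (x : E) : kOp k (fun _ => (1 : ℝ)) x = (k x).real Set.univ := by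
  simp [kOp]

theorem abs_kOp_le {k : E → Measure E} {x : E} (hk : k x Set.univ ≤ 1) {f : E → ℝ} {C : ℝ}
    (hf : ∀ y, |f y| ≤ C) : |kOp k f x| ≤ C := by
  have : IsFiniteMeasure (k x) := ⟨hk.trans_lt ENNReal.one_lt_top⟩
  have hC : 0 ≤ C := (abs_nonneg _).trans (hf x)
  calc |kOp k f x| ≤ C * (k x).real Set.univ :=
        norm_integral_le_of_norm_le_const (f := f) (ae_of_all _ hf)
    _ ≤ C * 1 := by gcongr; exact ENNReal.toReal_le_of_le_ofReal zero_le_one (by simpa using hk)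
    _ = C := mul_one C

end KernelOperators

namespace IsKernelSemigroup

variable {E : Type*} [MeasurableSpace E] {k : ℝ → E → Measure E} {M : NNReal} {t s : ℝ}
  {f : E → ℝ}

theorem isFiniteMeasure (h : IsKernelSemigroup k M) (ht : 0 < t) (x : E) :
    IsFiniteMeasure (k t x) :=
  ⟨(h.2.1 t ht x).trans_lt ENNReal.coe_lt_top⟩

theorem measurable_kOp (h : IsKernelSemigroup k M) (ht : 0 < t) (hf : IsBb f) :
    Measurable (kOp (k t) f) :=
  (h.2.2.2 f hf).comp ((measurable_const (a := (⟨t, ht⟩ : Set.Ioi (0 : ℝ)))).prodMk measurable_id)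

theorem measure_univ_le_one (h : IsKernelSemigroup k 1) (ht : 0 < t) (x : E) :
    k t x Set.univ ≤ 1 := by
  simpa using h.2.1 t ht x

theorem isBb_kOp (h : IsKernelSemigroup k 1) (ht : 0 < t) (hf : IsBb f) :
    IsBb (kOp (k t) f) :=
  let ⟨_, C, hC⟩ := hf
  ⟨h.measurable_kOp ht hf, C, fun x => abs_kOp_le (h.measure_univ_le_one ht x) hC⟩

theorem aestronglyMeasurable_kOp (h : IsKernelSemigroup k M) (hf : IsBb f) (x : E) :
    AEStronglyMeasurable (fun τ => kOp (k τ) f x) (volume.restrict (Set.Ioi 0)) :=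
  ((aemeasurable_restrict_iff_comap_subtype measurableSet_Ioi).2
    ((h.2.2.2 f hf).comp (measurable_id.prodMk measurable_const)).aemeasurable).aestronglyMeasurable

theorem isUnitBoundedFamily_kOp_one (h : IsKernelSemigroup k 1) :
    IsUnitBoundedFamily fun τ => kOp (k τ) fun _ => (1 : ℝ) :=
  ⟨h.aestronglyMeasurable_kOp isBb_one, fun _ hτ x =>
    abs_kOp_le (h.measure_univ_le_one hτ x) fun _ => abs_one.le⟩

theorem kOp_add (h : IsKernelSemigroup k M) (ht : 0 < t) (hs : 0 < s) (hf : IsBb f) :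
    kOp (k (t + s)) f = kOp (k t) (kOp (k s) f) := by
  funext x
  let κ : Kernel E E := ⟨k t, Measure.measurable_of_measurable_coe _ (h.1 t ht)⟩
  let η : Kernel E E := ⟨k s, Measure.measurable_of_measurable_coe _ (h.1 s hs)⟩
  have hcomp : k (t + s) x = (η ∘ₖ κ) x := by
    ext A hA
    rw [Kernel.comp_apply' _ _ _ hA]
    exact h.2.2.1 t ht s hs x A hA
  have := h.isFiniteMeasure (add_pos ht hs) x
  obtain ⟨hfm, C, hfC⟩ := hf
  have hint : Integrable f (k (t + s) x) := .of_bound hfm.aestronglyMeasurable C (ae_of_all _ hfC)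
  rw [hcomp] at hint
  rw [kOp, hcomp]
  exact Kernel.integral_comp hint

theorem antitoneOn_kOp_one (h : IsKernelSemigroup k 1) (x : E) :
    AntitoneOn (fun τ => kOp (k τ) (fun _ => (1 : ℝ)) x) (Set.Ioi 0) := by
  intro σ hσ τ hτ hστ
  obtain rfl | hlt := hστ.eq_or_lt
  · exact le_rfl
  have := h.isFiniteMeasure hσ x
  have hCK := h.2.2.1 σ hσ (τ - σ) (sub_pos.2 hlt) x Set.univ MeasurableSet.univ
  rw [add_sub_cancel] at hCK
  simp only [kOp_one]
  refine ENNReal.toReal_mono (measure_ne_top _ _) ?_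
  calc k τ x Set.univ = ∫⁻ y, k (τ - σ) y Set.univ ∂k σ x := hCK
    _ ≤ ∫⁻ _, 1 ∂k σ x := lintegral_mono fun y => h.measure_univ_le_one (sub_pos.2 hlt) y
    _ = k σ x Set.univ := lintegral_one

theorem continuousAt_kOp_one [TopologicalSpace E] {l s : ℝ} {x : E} (h : IsKernelSemigroup k 1)
    (hl : 0 < l) (hwin : ∀ a b, 0 < a → a < b →
      Continuous (laplaceOn (fun τ => kOp (k τ) fun _ => (1 : ℝ)) l (Set.Ioc a b)))
    (hs : 0 < s) (hsx : ContinuousAt (fun τ => kOp (k τ) (fun _ => (1 : ℝ)) x) s) :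
    ContinuousAt (kOp (k s) fun _ => (1 : ℝ)) x :=
  continuousAt_of_continuous_laplaceOn_Ioc hl h.isUnitBoundedFamily_kOp_one h.antitoneOn_kOp_one
    hwin hs hsx

end IsKernelSemigroup

section MonotoneSequence

variable {E : Type*} [MeasurableSpace E] {kseq : ℕ → ℝ → E → Measure E}
  {klim : ℝ → E → Measure E}

theorem le_or_ge_of_monotone_of_tendsto_kOp {M M' : NNReal}
    (hsg : ∀ n, IsKernelSemigroup (kseq n) M) (hlimsg : IsKernelSemigroup klim M')
    (hmono : (∀ n, ∀ t, 0 < t → ∀ x, ∀ A : Set E, MeasurableSet A →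
        kseq n t x A ≤ kseq (n + 1) t x A) ∨
      (∀ n, ∀ t, 0 < t → ∀ x, ∀ A : Set E, MeasurableSet A →
        kseq (n + 1) t x A ≤ kseq n t x A))
    (hlim : ∀ f : E → ℝ, IsBb f → ∀ t, 0 < t → ∀ x,
      Tendsto (fun n => kOp (kseq n t) f x) atTop (𝓝 (kOp (klim t) f x))) :
    (∀ n t, 0 < t → ∀ x, kseq n t x ≤ klim t x) ∨ ∀ n t, 0 < t → ∀ x, klim t x ≤ kseq n t x := by
  have hlimA : ∀ t, 0 < t → ∀ x A, MeasurableSet A →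
      Tendsto (fun n => (kseq n t x).real A) atTop (𝓝 ((klim t x).real A)) := fun t ht x A hA => by
    simpa only [kOp_indicator_one _ hA] using hlim _ (isBb_indicator_one hA) t ht x
  refine hmono.imp (fun hinc n t ht x => ?_) (fun hdec n t ht x => ?_)
  all_goals
    have := fun n => (hsg n).isFiniteMeasure ht x
    have := hlimsg.isFiniteMeasure ht x
  · exact le_of_tendsto_measureReal_of_monotone (hinc · t ht x) (hlimA t ht x) n
  · exact ge_of_tendsto_measureReal_of_antitone (hdec · t ht x) (hlimA t ht x) n

theorem continuous_laplaceOn_kOp_one [TopologicalSpace E] [FirstCountableTopology E]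
    {l : ℝ} {S : Set ℝ}
    (hsg : ∀ n, IsKernelSemigroup (kseq n) 1) (hlimsg : IsKernelSemigroup klim 1)
    (hcmp : (∀ n t, 0 < t → ∀ x, kseq n t x ≤ klim t x) ∨
      ∀ n t, 0 < t → ∀ x, klim t x ≤ kseq n t x)
    (hcont : ∀ n t, 0 < t → Continuous (kOp (kseq n t) fun _ => (1 : ℝ)))
    (hlim : ∀ t, 0 < t → ∀ x, Tendsto (fun n => kOp (kseq n t) (fun _ => (1 : ℝ)) x) atTop
      (𝓝 (kOp (klim t) (fun _ => (1 : ℝ)) x)))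
    (hl : 0 < l) (hR : Continuous (laplaceOp klim l fun _ => (1 : ℝ)))
    (hSm : MeasurableSet S) (hS : S ⊆ Set.Ioi 0) :
    Continuous (laplaceOn (fun τ => kOp (klim τ) fun _ => (1 : ℝ)) l S) := by
  have hmass_mono : ∀ {μ ν : E → Measure E} {x}, μ x ≤ ν x → ν x Set.univ ≠ ⊤ →
      kOp μ (fun _ => (1 : ℝ)) x ≤ kOp ν (fun _ => (1 : ℝ)) x := fun hle hν => by
    simpa only [kOp_one, measureReal_def] using ENNReal.toReal_mono hν (hle Set.univ)
  refine continuous_laplaceOn_of_monotone_approx hl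
    (fun n => (hsg n).isUnitBoundedFamily_kOp_one) hcont hlimsg.isUnitBoundedFamily_kOp_one
    (hcmp.imp (fun h n τ hτ y => hmass_mono (h n τ hτ y) ?_)
      (fun h n τ hτ y => hmass_mono (h n τ hτ y) ?_)) hlim hR hSm hS
  · exact ((hlimsg.measure_univ_le_one hτ y).trans_lt ENNReal.one_lt_top).ne
  · exact (((hsg n).measure_univ_le_one hτ y).trans_lt ENNReal.one_lt_top).ne

theorem continuousAt_kOp_of_tendsto_kOp_one [TopologicalSpace E] {kn : ℕ → E → Measure E}
    {k : E → Measure E} [∀ n y, IsFiniteMeasure (kn n y)] [∀ y, IsFiniteMeasure (k y)]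
    {g : E → ℝ} {x : E} (hcmp : ∀ n y, kn n y ≤ k y ∨ k y ≤ kn n y)
    (hFeller : ∀ n f, IsBb f → IsCb (kOp (kn n) f)) (hg : IsBb g)
    (hmass : ContinuousAt (kOp k fun _ => (1 : ℝ)) x)
    (hlim : Tendsto (fun n => kOp (kn n) (fun _ => (1 : ℝ)) x) atTop
      (𝓝 (kOp k (fun _ => (1 : ℝ)) x))) :
    ContinuousAt (kOp k g) x :=
  let ⟨hgm, C, hgC⟩ := hg
  continuousAt_of_abs_sub_le_mul_abs_sub (C := C)
    (fun n y => by
      rw [kOp_one, kOp_one]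
      exact abs_integral_sub_integral_le (hcmp n y).symm hgm hgC)
    (fun n => (hFeller n g hg).1.continuousAt) (fun n => (hFeller n _ isBb_one).1.continuousAt)
    hmass hlim

end MonotoneSequence

theorem strong_feller_of_limit_semigroup_general
    {E : Type*} [TopologicalSpace E] [PolishSpace E] [MeasurableSpace E]
    (kseq : ℕ → ℝ → E → Measure E) (klim : ℝ → E → Measure E)
    (hsg : ∀ n, IsKernelSemigroup (kseq n) 1)
    (hmono : (∀ n, ∀ t, 0 < t → ∀ x, ∀ A : Set E, MeasurableSet A →
        kseq n t x A ≤ kseq (n + 1) t x A) ∨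
      (∀ n, ∀ t, 0 < t → ∀ x, ∀ A : Set E, MeasurableSet A →
        kseq (n + 1) t x A ≤ kseq n t x A))
    (hA : ∀ n, ∀ t, 0 < t → ∀ f : E → ℝ, IsBb f → IsCb (kOp (kseq n t) f))
    (hlimsg : IsKernelSemigroup klim 1)
    (hlim : ∀ f : E → ℝ, IsBb f → ∀ t, 0 < t → ∀ x,
      Tendsto (fun n => kOp (kseq n t) f x) atTop (𝓝 (kOp (klim t) f x)))
    (hB : ∃ l : ℝ, 0 < l ∧ Continuous (laplaceOp klim l (fun _ => (1 : ℝ)))) :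
    ∀ t, 0 < t → ∀ f : E → ℝ, IsBb f → IsCb (kOp (klim t) f) := by
  intro t ht f hf
  obtain ⟨l, hl, hR⟩ := hB
  have hcmp := le_or_ge_of_monotone_of_tendsto_kOp hsg hlimsg hmono hlim
  have hwin : ∀ a b, 0 < a → a < b →
      Continuous (laplaceOn (fun τ => kOp (klim τ) fun _ => (1 : ℝ)) l (Set.Ioc a b)) :=
    fun a b ha _ => continuous_laplaceOn_kOp_one hsg hlimsg hcmp
      (fun n τ hτ => (hA n τ hτ _ isBb_one).1) (fun τ hτ => hlim _ isBb_one τ hτ) hl hR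
      measurableSet_Ioc fun τ hτ => ha.trans hτ.1
  refine ⟨continuous_iff_continuousAt.2 fun x => ?_, (hlimsg.isBb_kOp ht hf).2⟩
  obtain ⟨s, ⟨hs, hst⟩, hsx⟩ :=
    exists_mem_Ioo_continuousAt_of_antitoneOn (hlimsg.antitoneOn_kOp_one x) ht
  have := hlimsg.isFiniteMeasure hs
  have := fun n => (hsg n).isFiniteMeasure hs
  rw [← add_sub_cancel s t, hlimsg.kOp_add hs (sub_pos.2 hst) hf]
  exact continuousAt_kOp_of_tendsto_kOp_one (fun n y => hcmp.imp (· n s hs y) (· n s hs y))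
    (fun n => hA n s hs) (hlimsg.isBb_kOp (sub_pos.2 hst) hf)
    (hlimsg.continuousAt_kOp_one hl hwin hs hsx) (hlim _ isBb_one s hs x)

/-- **Monotone convergence theorem for strong Feller semigroups.** If a monotone
sequence of sub-Markovian semigroups of kernel operators consists of strong Feller
semigroups and the Laplace transform of the limit semigroup maps `𝟙` to a continuous
function, then the limit semigroup enjoys the strong Feller property. -/
theorem strong_feller_of_limit_semigroup
    {E : Type*} [TopologicalSpace E] [PolishSpace E] [MeasurableSpace E] [BorelSpace E]
    (kseq : ℕ → ℝ → E → Measure E) (klim : ℝ → E → Measure E)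
    (hsg : ∀ n, IsKernelSemigroup (kseq n) 1)
    (hmono : (∀ n, ∀ t, 0 < t → ∀ x, ∀ A : Set E, MeasurableSet A →
        kseq n t x A ≤ kseq (n + 1) t x A) ∨
      (∀ n, ∀ t, 0 < t → ∀ x, ∀ A : Set E, MeasurableSet A →
        kseq (n + 1) t x A ≤ kseq n t x A))
    (hA : ∀ n, ∀ t, 0 < t → ∀ f : E → ℝ, IsBb f → IsCb (kOp (kseq n t) f))
    (hlimsg : IsKernelSemigroup klim 1)
    (hlim : ∀ f : E → ℝ, IsBb f → ∀ t, 0 < t → ∀ x,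
      Tendsto (fun n => kOp (kseq n t) f x) atTop (𝓝 (kOp (klim t) f x)))
    (hB : ∃ l : ℝ, 0 < l ∧ Continuous (laplaceOp klim l (fun _ => (1 : ℝ)))) :
    ∀ t, 0 < t → ∀ f : E → ℝ, IsBb f → IsCb (kOp (klim t) f) :=
  strong_feller_of_limit_semigroup_general kseq klim hsg hmono hA hlimsg hlim hB
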